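/- For every β ∈ (0,1] and all x = (x₁,x₂), w = (w₁,w₂) ∈ ℤ²: ∑_{y,z∈ℤ²} exp(−2β|x−y| − 2β|y₂−z₂| − 2β|y₁| − 2β|z₁| − 2β|z₁−w₁| − 2β|z₂| − 2β|w₂|) ≤ (4/β)⁴ · e^{−β|x| − β|w|}, where y = (y₁,y₂), z = (z₁,z₂), and |x| = |x₁| + |x₂| is the ℓ¹-norm on ℤ². -/

import Mathlib

open scoped ENNReal

noncomputable section

/-- Sites of the lattice `ℤ²`. -/
abbrev Site : Type := ℤ × ℤ

/-- The `ℓ¹`-distance on `ℤ²`. -/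
def dist1 (x y : Site) : ℝ := |(x.1 : ℝ) - (y.1 : ℝ)| + |(x.2 : ℝ) - (y.2 : ℝ)|

/-- The `ℓ¹`-norm on `ℤ²`. -/
def norm1 (x : Site) : ℝ := |(x.1 : ℝ)| + |(x.2 : ℝ)|

/-- The (closed) `ℓ¹`-ball of radius `r` centered at `x` in `ℤ²`. -/
def ball1 (x : Site) (r : ℝ) : Set Site := {y | dist1 y x ≤ r}

/-- The fiber `ℂᵈ`. -/
abbrev Fib (d : ℕ) := EuclideanSpace ℂ (Fin d)

/-- The Hilbert space `ℓ²(ℤ², ℂᵈ)`. -/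
abbrev L2 (d : ℕ) := lp (fun _ : Site => Fib d) 2

/-- Bounded operators on `ℓ²(ℤ², ℂᵈ)`. -/
abbrev Op (d : ℕ) := L2 d →L[ℂ] L2 d

/-- The kernel `A(x,y) : ℂᵈ → ℂᵈ` of an operator `A`; `‖ker A x y‖` is the norm `|A(x,y)|`. -/
def ker {d : ℕ} (A : Op d) (x y : Site) : Fib d →L[ℂ] Fib d :=
  LinearMap.toContinuousLinearMap
    { toFun := fun v => A (lp.single 2 y v) x
      map_add' := fun v w => by
        have h : lp.single (E := fun _ : Site => Fib d) 2 y (v + w)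
            = lp.single 2 y v + lp.single 2 y w := by
          apply lp.ext
          funext j
          by_cases hj : j = y
          · subst hj
            simp [lp.single_apply_self, lp.coeFn_add]
          · simp [lp.single_apply_ne _ _ _ hj, lp.coeFn_add]
        show (A (lp.single 2 y (v + w))) x = _
        rw [h, map_add, lp.coeFn_add]
        rfl
      map_smul' := fun c v => by
        show (A (lp.single 2 y (c • v))) x = _
        rw [lp.single_smul, map_smul, lp.coeFn_smul]
        rfl }

/-- `ν`-short-range operators: the kernel satisfies `|A(x,y)| ≤ ν⁻¹ e^{-2ν|x-y|}`. -/
def ShortRange {d : ℕ} (ν : ℝ) (A : Op d) : Prop :=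
  ∀ x y : Site, ‖ker A x y‖ ≤ ν⁻¹ * Real.exp (-2 * ν * dist1 x y)

private lemma indicator_memℓp {d : ℕ} (S : Set Site) (f : L2 d) :
    Memℓp (S.indicator (fun y => (f : ∀ _ : Site, Fib d) y)) 2 := by
  apply memℓp_gen
  have hs : Summable fun i : Site => ‖(f : ∀ _ : Site, Fib d) i‖ ^ (2 : ℝ≥0∞).toReal :=
    (lp.memℓp f).summable (by norm_num)
  refine hs.of_nonneg_of_le (fun i => ?_) (fun i => ?_)
  · positivity
  · exact Real.rpow_le_rpow (norm_nonneg _) (norm_indicator_le_norm_self _ _) (by norm_num)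

/-- Multiplication by the indicator function of a set `S ⊆ ℤ²`. -/
def indOp {d : ℕ} (S : Set Site) : Op d :=
  LinearMap.mkContinuous
    { toFun := fun f => ⟨S.indicator (fun y => (f : ∀ _ : Site, Fib d) y),
        indicator_memℓp S f⟩
      map_add' := fun f g => by
        apply lp.ext
        funext j
        by_cases hj : j ∈ S <;>
          simp [lp.coeFn_add, Set.indicator_apply, hj] <;> erw [Pi.add_apply] <;> simp [hj]
      map_smul' := fun c f => by
        apply lp.ext
        funext j
        by_cases hj : j ∈ S <;>
          simp [lp.coeFn_smul, Set.indicator_apply, hj] }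
    1 (fun f => by
      rw [one_mul]
      apply lp.norm_le_of_tsum_le (by norm_num) (norm_nonneg f)
      show (∑' i : Site, ‖S.indicator (fun y => (f : ∀ _ : Site, Fib d) y) i‖ ^ (2 : ℝ≥0∞).toReal) ≤ _
      rw [lp.norm_rpow_eq_tsum (by norm_num) f]
      have hs : Summable fun i : Site => ‖(f : ∀ _ : Site, Fib d) i‖ ^ (2 : ℝ≥0∞).toReal :=
        (lp.memℓp f).summable (by norm_num)
      refine Summable.tsum_le_tsum (fun i => ?_) ((indicator_memℓp S f).summable (by norm_num)) hs
      exact Real.rpow_le_rpow (norm_nonneg _) (norm_indicator_le_norm_self _ _) (by norm_num))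

/-- Multiplication by the indicator function of `ℕ × ℤ`. -/
def Lam1 (d : ℕ) : Op d := indOp {x : Site | 0 ≤ x.1}

/-- Multiplication by the indicator function of `ℤ × ℕ`. -/
def Lam2 (d : ℕ) : Op d := indOp {x : Site | 0 ≤ x.2}

/-- The real continuous functional calculus on `Op d` (no longer found automatically). -/
instance opCFCReal (d : ℕ) : ContinuousFunctionalCalculus ℝ (Op d) IsSelfAdjoint :=
  IsSelfAdjoint.instContinuousFunctionalCalculus

/-- The spectral projection `P_λ(H) = 𝟙_{(-∞,λ)}(H)`, via the continuous functional
calculus (for `H` selfadjoint with a spectral gap around `λ`, the indicator function of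
`(-∞,λ)` is continuous on the spectrum of `H`). -/
def specProj {d : ℕ} (lam : ℝ) (H : Op d) : Op d :=
  cfc (fun t : ℝ => if t < lam then (1 : ℝ) else 0) H

/-- Commutator of operators. -/
def commOp {d : ℕ} (A B : Op d) : Op d := A * B - B * A

/-- Trace of a `d × d` block. -/
def blockTr {d : ℕ} (T : Fib d →L[ℂ] Fib d) : ℂ :=
  LinearMap.trace ℂ (Fib d) (T : Fib d →ₗ[ℂ] Fib d)

/-- The operator `B = P_λ(H) [[P_λ(H),Λ₁],[P_λ(H),Λ₂]]`. -/
def hallOp {d : ℕ} (lam : ℝ) (H : Op d) : Op d :=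
  specProj lam H *
    commOp (commOp (specProj lam H) (Lam1 d)) (commOp (specProj lam H) (Lam2 d))

/-- The bulk conductance `σ(H,λ) = -2πi ∑_{x ∈ ℤ²} tr(B(x,x))`. -/
def conduct {d : ℕ} (lam : ℝ) (H : Op d) : ℂ :=
  (-2 * (Real.pi : ℂ) * Complex.I) * ∑' x : Site, blockTr (ker (hallOp lam H) x x)

/-- The boundary `∂Ω` of `Ω ⊆ ℤ²`. -/
def bdry (Ω : Set Site) : Set Site :=
  {x ∈ Ω | ¬ ball1 x 1 ⊆ Ω} ∪ {x ∈ Ωᶜ | ¬ ball1 x 1 ⊆ Ωᶜ}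

/-- `H_e` is an edge operator for the pair `(H₊, H₋)` on `Ω`: it is selfadjoint,
`ν`-short-range, and `E = H_e - 𝟙_Ω H₊ 𝟙_Ω - 𝟙_{Ωᶜ} H₋ 𝟙_{Ωᶜ}` satisfies
`|E(x,y)| ≤ ν⁻¹ e^{-2ν d(x,∂Ω)}`.  (The distance `d(x,∂Ω)` is expressed through all its
real lower bounds `r`; if `∂Ω = ∅` this forces `E(x,y) = 0`, consistent with
`d(x,∅) = +∞`.) -/
def IsEdgeOp {d : ℕ} (ν : ℝ) (Hp Hm : Op d) (Ω : Set Site) (He : Op d) : Prop :=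
  IsSelfAdjoint He ∧ ShortRange ν He ∧
    ∀ x y : Site, ∀ r : ℝ, (∀ z ∈ bdry Ω, r ≤ dist1 x z) →
      ‖ker (He - indOp Ω * Hp * indOp Ω - indOp Ωᶜ * Hm * indOp Ωᶜ) x y‖ ≤
        ν⁻¹ * Real.exp (-2 * ν * r)

private def F (β : ℝ) (k : ℤ) : ℝ := Real.exp (-β) ^ k.natAbs

variable {β : ℝ}

private lemma F_nonneg (k : ℤ) : 0 ≤ F β k := pow_nonneg (Real.exp_nonneg _) _

private lemma F_eq (k : ℤ) : F β k = Real.exp (-β * |(k : ℝ)|) := by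
  rw [F, ← Real.exp_nat_mul]
  congr 1
  rw [Nat.cast_natAbs]
  push_cast
  ring

private lemma summable_F (hβ : 0 < β) : Summable (F β) := by
  have hr : Real.exp (-β) < 1 := Real.exp_lt_one_iff.mpr (by linarith)
  have hn : Summable fun n : ℕ => Real.exp (-β) ^ n :=
    summable_geometric_of_lt_one (Real.exp_nonneg _) hr
  refine Summable.of_nat_of_neg ?_ ?_ <;> simpa [F] using hn

private lemma tsum_F_le (hβ0 : 0 < β) (hβ1 : β ≤ 1) : ∑' k : ℤ, F β k ≤ 4 / β := by
  have hr0 : 0 ≤ Real.exp (-β) := Real.exp_nonneg _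
  have hr : Real.exp (-β) < 1 := Real.exp_lt_one_iff.mpr (by linarith)
  have hn : Summable fun n : ℕ => Real.exp (-β) ^ n :=
    summable_geometric_of_lt_one hr0 hr
  have h1 : ∑' k : ℤ, F β k = (∑' n : ℕ, Real.exp (-β) ^ n)
      + (∑' n : ℕ, Real.exp (-β) ^ n) - 1 := by
    rw [Summable.tsum_of_nat_of_neg (by simpa [F] using hn) (by simpa [F] using hn)]
    simp [F]
  rw [h1, tsum_geometric_of_lt_one hr0 hr]
  have hb : Real.exp (-β) ≤ 1 / (1 + β) := by
    rw [Real.exp_neg, one_div]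
    exact inv_anti₀ (by linarith) (Real.add_one_le_exp β |>.trans_eq' (by ring))
  have hkey : β / 2 ≤ 1 - Real.exp (-β) := by
    have h1b : 1 / (1 + β) ≤ 1 - β / 2 := by
      rw [div_le_iff₀ (by linarith : (0:ℝ) < 1 + β)]
      nlinarith
    linarith
  have h2 : (1 - Real.exp (-β))⁻¹ ≤ 2 / β := by
    rw [inv_le_iff_one_le_mul₀ (by linarith)]
    rw [div_mul_eq_mul_div, le_div_iff₀ hβ0]
    nlinarith
  have h3 : 2 / β + 2 / β = 4 / β := by ring
  linarith

private def Gfun (β : ℝ) (x w : Site) (p : Site × Site) : ℝ :=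
  F β (x.1 - p.1.1) * F β (x.2 - p.1.2) * (F β (p.2.1 - w.1) * F β (p.1.2 - p.2.2))

private def shiftE (x w : Site) : (Site × Site) ≃ (Site × Site) where
  toFun q := ((x.1 - q.1.1, x.2 - q.1.2), (q.2.1 + w.1, (x.2 - q.1.2) - q.2.2))
  invFun p := ((x.1 - p.1.1, x.2 - p.1.2), (p.2.1 - w.1, p.1.2 - p.2.2))
  left_inv := by rintro ⟨⟨a, b⟩, ⟨c, d⟩⟩; simp
  right_inv := by rintro ⟨⟨a, b⟩, ⟨c, d⟩⟩; simp

private lemma Gfun_shiftE (β : ℝ) (x w : Site) (q : Site × Site) :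
    Gfun β x w (shiftE x w q) =
      (F β q.1.1 * F β q.1.2) * (F β q.2.1 * F β q.2.2) := by
  obtain ⟨⟨a, b⟩, ⟨c, d⟩⟩ := q
  show F β (x.1 - (x.1 - a)) * F β (x.2 - (x.2 - b)) *
      (F β ((c + w.1) - w.1) * F β ((x.2 - b) - ((x.2 - b) - d))) = _
  rw [sub_sub_cancel, sub_sub_cancel, add_sub_cancel_right, sub_sub_cancel]

private lemma summable_PP {β : ℝ} (hβ0 : 0 < β) :
    Summable fun q : (ℤ × ℤ) × (ℤ × ℤ) =>
      (F β q.1.1 * F β q.1.2) * (F β q.2.1 * F β q.2.2) := by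
  have hP : Summable fun s : ℤ × ℤ => F β s.1 * F β s.2 :=
    (summable_F hβ0).mul_of_nonneg (summable_F hβ0) (fun _ => F_nonneg _) fun _ => F_nonneg _
  exact hP.mul_of_nonneg hP (fun s => mul_nonneg (F_nonneg _) (F_nonneg _))
    fun s => mul_nonneg (F_nonneg _) (F_nonneg _)

private lemma summable_Gfun {β : ℝ} (hβ0 : 0 < β) (x w : Site) :
    Summable (Gfun β x w) := by
  rw [← (shiftE x w).summable_iff]
  exact (summable_PP hβ0).congr fun q => (Gfun_shiftE β x w q).symm

private lemma tsum_Gfun_le {β : ℝ} (hβ0 : 0 < β) (hβ1 : β ≤ 1) (x w : Site) :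
    ∑' p : Site × Site, Gfun β x w p ≤ (4 / β) ^ 4 := by
  have hP : Summable fun s : ℤ × ℤ => F β s.1 * F β s.2 :=
    (summable_F hβ0).mul_of_nonneg (summable_F hβ0) (fun _ => F_nonneg _) fun _ => F_nonneg _
  have hfib : ∀ a : ℤ, Summable fun c : ℤ => F β a * F β c :=
    fun a => (summable_F hβ0).mul_left _
  have htP : ∑' s : ℤ × ℤ, F β s.1 * F β s.2 = (∑' k : ℤ, F β k) * ∑' k : ℤ, F β k := by
    rw [Summable.tsum_prod' hP hfib]
    simp_rw [tsum_mul_left, tsum_mul_right]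
  have hPP := summable_PP (β := β) hβ0
  have hfib2 : ∀ a : ℤ × ℤ, Summable fun c : ℤ × ℤ =>
      (F β a.1 * F β a.2) * (F β c.1 * F β c.2) := fun a => hP.mul_left _
  have h1 : ∑' p : Site × Site, Gfun β x w p =
      ((∑' k : ℤ, F β k) * ∑' k : ℤ, F β k) * ((∑' k : ℤ, F β k) * ∑' k : ℤ, F β k) := by
    rw [← (shiftE x w).tsum_eq (Gfun β x w), tsum_congr (Gfun_shiftE β x w),
      Summable.tsum_prod' hPP hfib2]
    simp_rw [tsum_mul_left, tsum_mul_right, htP]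
  have hS0 : 0 ≤ ∑' k : ℤ, F β k := tsum_nonneg fun _ => F_nonneg _
  have hSle := tsum_F_le hβ0 hβ1
  calc ∑' p : Site × Site, Gfun β x w p
      = (∑' k : ℤ, F β k) ^ 4 := by rw [h1]; ring
    _ ≤ (4 / β) ^ 4 := pow_le_pow_left₀ hS0 hSle 4

private lemma pointwise {β : ℝ} (hβ0 : 0 < β) (x w : Site) (p : Site × Site) :
    Real.exp (-2 * β * dist1 x p.1 - 2 * β * |(p.1.2 : ℝ) - (p.2.2 : ℝ)|
          - 2 * β * |(p.1.1 : ℝ)| - 2 * β * |(p.2.1 : ℝ)|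
          - 2 * β * |(p.2.1 : ℝ) - (w.1 : ℝ)| - 2 * β * |(p.2.2 : ℝ)|
          - 2 * β * |(w.2 : ℝ)|) ≤
      Real.exp (-β * norm1 x - β * norm1 w) * Gfun β x w p := by
  obtain ⟨⟨y1, y2⟩, ⟨z1, z2⟩⟩ := p
  simp only [Gfun, F_eq, ← Real.exp_add, dist1, norm1]
  rw [Real.exp_le_exp]
  push_cast
  have h1 : |(x.1 : ℝ)| ≤ |(x.1 : ℝ) - y1| + |(y1 : ℝ)| := by
    simpa using abs_add_le ((x.1 : ℝ) - y1) (y1 : ℝ)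
  have h2 : |(w.1 : ℝ)| ≤ |(z1 : ℝ) - w.1| + |(z1 : ℝ)| := by
    rw [abs_sub_comm]
    simpa using abs_add_le ((w.1 : ℝ) - z1) (z1 : ℝ)
  have h3 : |(x.2 : ℝ)| ≤ |(x.2 : ℝ) - y2| + |(y2 : ℝ)| := by
    simpa using abs_add_le ((x.2 : ℝ) - y2) (y2 : ℝ)
  have h4 : |(y2 : ℝ)| ≤ |(y2 : ℝ) - z2| + |(z2 : ℝ)| := by
    simpa using abs_add_le ((y2 : ℝ) - z2) (z2 : ℝ)
  have key : (|(x.1 : ℝ)| + |(x.2 : ℝ)|) + (|(w.1 : ℝ)| + |(w.2 : ℝ)|) +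
      (|(x.1 : ℝ) - y1| + |(x.2 : ℝ) - y2| + |(z1 : ℝ) - w.1| + |(y2 : ℝ) - z2|) ≤
      2 * ((|(x.1 : ℝ) - y1| + |(x.2 : ℝ) - y2|) + |(y2 : ℝ) - z2| + |(y1 : ℝ)|
        + |(z1 : ℝ)| + |(z1 : ℝ) - w.1| + |(z2 : ℝ)| + |(w.2 : ℝ)|) := by
    have := abs_nonneg (y1 : ℝ)
    have := abs_nonneg (z1 : ℝ)
    have := abs_nonneg (z2 : ℝ)
    have := abs_nonneg (w.2 : ℝ)
    linarith
  nlinarith [mul_le_mul_of_nonneg_left key hβ0.le]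

/-- **Statement 19.** The key convolution-type exponential sum estimate. -/
theorem convolution_exp_estimate (β : ℝ) (hβ0 : 0 < β) (hβ1 : β ≤ 1) (x w : Site) :
    (∑' p : Site × Site,
        Real.exp (-2 * β * dist1 x p.1 - 2 * β * |(p.1.2 : ℝ) - (p.2.2 : ℝ)|
          - 2 * β * |(p.1.1 : ℝ)| - 2 * β * |(p.2.1 : ℝ)|
          - 2 * β * |(p.2.1 : ℝ) - (w.1 : ℝ)| - 2 * β * |(p.2.2 : ℝ)|
          - 2 * β * |(w.2 : ℝ)|)) ≤
      (4 / β) ^ 4 * Real.exp (-β * norm1 x - β * norm1 w) := by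
  have hC0 : (0:ℝ) ≤ Real.exp (-β * norm1 x - β * norm1 w) := Real.exp_nonneg _
  have hGsum : Summable fun p : Site × Site =>
      Real.exp (-β * norm1 x - β * norm1 w) * Gfun β x w p :=
    (summable_Gfun hβ0 x w).mul_left _
  have hpt := pointwise hβ0 x w
  have hLsum : Summable fun p : Site × Site =>
      Real.exp (-2 * β * dist1 x p.1 - 2 * β * |(p.1.2 : ℝ) - (p.2.2 : ℝ)|
          - 2 * β * |(p.1.1 : ℝ)| - 2 * β * |(p.2.1 : ℝ)|
          - 2 * β * |(p.2.1 : ℝ) - (w.1 : ℝ)| - 2 * β * |(p.2.2 : ℝ)|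
          - 2 * β * |(w.2 : ℝ)|) :=
    hGsum.of_nonneg_of_le (fun p => Real.exp_nonneg _) hpt
  calc _ ≤ ∑' p : Site × Site, Real.exp (-β * norm1 x - β * norm1 w) * Gfun β x w p :=
        Summable.tsum_le_tsum hpt hLsum hGsum
    _ = Real.exp (-β * norm1 x - β * norm1 w) * ∑' p : Site × Site, Gfun β x w p :=
        tsum_mul_left
    _ ≤ Real.exp (-β * norm1 x - β * norm1 w) * (4 / β) ^ 4 :=
        mul_le_mul_of_nonneg_left (tsum_Gfun_le hβ0 hβ1 x w) hC0
    _ = (4 / β) ^ 4 * Real.exp (-β * norm1 x - β * norm1 w) := by ring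

end
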